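/- arXiv:1902.00787 — 3 statements merged into one kernel-verified Lean document; each statement's English description precedes it below -/
import Mathlib

section
/- A k-bilinear map ⟪−,−⟫ : A × A → A ⊗ A satisfies the antisymmetry condition ⟪b,a⟫ = −τ(⟪a,b⟫) for all a, b ∈ A if and only if its associated trilinear maps satisfy the cyclicity condition m(f,b,g)(a) = −g(n(a,f,b)) for all a, b ∈ A and f, g ∈ A*. (This is the correspondence, established in the proof of Theorem 5.1, between condition (i) of a double Poisson bracket and the cyclic invariance of the triple product m₃ with respect to the natural evaluation pairing on A ⊕ A*[−1].) -/
open TensorProduct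

noncomputable section

variable {k : Type*} [Field k] [CharZero k]
variable {A : Type*} [NonUnitalRing A] [Module k A] [SMulCommClass k A A] [IsScalarTower k A A]

/-- Outer left action of `A` on `A ⊗ A`: `a · (u ⊗ v) = (a*u) ⊗ v`. -/
def lAct (a : A) : A ⊗[k] A →ₗ[k] A ⊗[k] A :=
  TensorProduct.map (LinearMap.mulLeft k a) LinearMap.id

/-- Outer right action of `A` on `A ⊗ A`: `(u ⊗ v) · b = u ⊗ (v*b)`. -/
def rAct (b : A) : A ⊗[k] A →ₗ[k] A ⊗[k] A :=
  TensorProduct.map LinearMap.id (LinearMap.mulRight k b)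

/-- `⟪a, u ⊗ v⟫_L = ⟪a,u⟫ ⊗ v`, extended linearly. -/
def brL (br : A →ₗ[k] A →ₗ[k] A ⊗[k] A) (a : A) :
    A ⊗[k] A →ₗ[k] (A ⊗[k] A) ⊗[k] A :=
  TensorProduct.map (br a) LinearMap.id

/-- The cyclic permutation `σ(u ⊗ v ⊗ w) = w ⊗ u ⊗ v` on `(A ⊗ A) ⊗ A`. -/
def cyc : (A ⊗[k] A) ⊗[k] A →ₗ[k] (A ⊗[k] A) ⊗[k] A :=
  (TensorProduct.assoc k A A A).symm.toLinearMap ∘ₗ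
    (TensorProduct.comm k (A ⊗[k] A) A).toLinearMap

/-- A double Poisson bracket: antisymmetry, Leibniz, and double Jacobi. -/
def IsDoublePoisson (br : A →ₗ[k] A →ₗ[k] A ⊗[k] A) : Prop :=
  (∀ a b : A, br b a = - (TensorProduct.comm k A A) (br a b)) ∧
  (∀ a b c : A, br a (b * c) = rAct c (br a b) + lAct b (br a c)) ∧
  (∀ a b c : A,
    brL br a (br b c) + cyc (brL br b (br c a)) + cyc (cyc (brL br c (br a b))) = 0)

/-- `(f ⊗ g) : A ⊗ A → k`. -/
def pair2 (f g : Module.Dual k A) : A ⊗[k] A →ₗ[k] k :=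
  TensorProduct.lift ((LinearMap.mul k k).compl₁₂ f g)

/-- The associated trilinear map `n(a,f,b) = (id ⊗ f)(⟪b,a⟫)`. -/
def nMap (br : A →ₗ[k] A →ₗ[k] A ⊗[k] A) (a : A) (f : Module.Dual k A) (b : A) : A :=
  TensorProduct.rid k A (TensorProduct.map LinearMap.id f (br b a))

/-- The associated trilinear map `m(f,a,g)(b) = (f ⊗ g)(⟪b,a⟫)`. -/
def mMap (br : A →ₗ[k] A →ₗ[k] A ⊗[k] A) (f : Module.Dual k A) (a : A)
    (g : Module.Dual k A) : Module.Dual k A :=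
  pair2 f g ∘ₗ br.flip a

/-- The left action of `A` on `A* = Hom_k(A,k)`: `(a·f)(c) = f(c*a)`. -/
def dL (a : A) (f : Module.Dual k A) : Module.Dual k A :=
  f ∘ₗ LinearMap.mulRight k a

/-- The right action of `A` on `A* = Hom_k(A,k)`: `(f·b)(c) = f(b*c)`. -/
def dR (f : Module.Dual k A) (b : A) : Module.Dual k A :=
  f ∘ₗ LinearMap.mulLeft k b

/-! Both sides of the cyclicity condition are values of the functional `f ⊗ g` on `A ⊗ A`: the left
one at `⟪a,b⟫`, the right one at `-τ⟪b,a⟫`. Over a field the functionals `f ⊗ g` separate the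
points of `A ⊗ A`, so cyclicity says exactly `⟪a,b⟫ = -τ⟪b,a⟫`. -/

theorem TensorProduct.eq_of_forall_dualDistrib_tmul_apply_eq {R M N : Type*} [CommSemiring R]
    [AddCommMonoid M] [Module R M] [Module.Free R M] [AddCommMonoid N] [Module R N]
    [Module.Free R N] {s t : M ⊗[R] N}
    (h : ∀ (f : Module.Dual R M) (g : Module.Dual R N),
      dualDistrib R M N (f ⊗ₜ g) s = dualDistrib R M N (f ⊗ₜ g) t) :
    s = t := by
  let b := Module.Free.chooseBasis R M
  let c := Module.Free.chooseBasis R N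
  have coord_eq : ∀ i j,
      dualDistrib R M N (b.coord i ⊗ₜ c.coord j) = (b.tensorProduct c).coord (i, j) := by
    intro i j
    ext m n
    simp [Module.Basis.tensorProduct_repr_tmul_apply, mul_comm]
  refine (b.tensorProduct c).ext_elem fun ij => ?_
  simpa [coord_eq] using h (b.coord ij.1) (c.coord ij.2)

omit [CharZero k] [SMulCommClass k A A] [IsScalarTower k A A] in
theorem pair2_eq_dualDistrib (f g : Module.Dual k A) :
    pair2 f g = dualDistrib k A A (f ⊗ₜ g) := by
  ext u v
  rfl

omit [CharZero k] [SMulCommClass k A A] [IsScalarTower k A A] in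
theorem mMap_apply (br : A →ₗ[k] A →ₗ[k] A ⊗[k] A) (f g : Module.Dual k A) (a b : A) :
    mMap br f b g a = pair2 f g (br a b) :=
  rfl

omit [CharZero k] [SMulCommClass k A A] [IsScalarTower k A A] in
theorem apply_nMap (br : A →ₗ[k] A →ₗ[k] A ⊗[k] A) (f g : Module.Dual k A) (a b : A) :
    g (nMap br a f b) = pair2 f g (TensorProduct.comm k A A (br b a)) := by
  suffices g ∘ₗ (TensorProduct.rid k A).toLinearMap ∘ₗ TensorProduct.map LinearMap.id f =
      pair2 f g ∘ₗ (TensorProduct.comm k A A).toLinearMap from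
    LinearMap.congr_fun this (br b a)
  ext u v
  simp [pair2]

/-- Antisymmetry of the bracket is equivalent to the cyclicity
condition `m(f,b,g)(a) = -g(n(a,f,b))` of the associated triple product. -/
theorem antisymmetry_iff_cyclicity (br : A →ₗ[k] A →ₗ[k] A ⊗[k] A) :
    (∀ a b : A, br b a = - (TensorProduct.comm k A A) (br a b)) ↔
    (∀ (a b : A) (f g : Module.Dual k A), mMap br f b g a = - g (nMap br a f b)) := by
  constructor
  · intro antisymm a b f g
    rw [mMap_apply, apply_nMap, antisymm b a, map_neg]
  · intro cyclic a b
    refine TensorProduct.eq_of_forall_dualDistrib_tmul_apply_eq fun f g => ?_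
    rw [← pair2_eq_dualDistrib, map_neg, ← apply_nMap, ← cyclic, mMap_apply]
end
end

section
/- Suppose the k-bilinear map ⟪−,−⟫ : A × A → A ⊗ A satisfies the antisymmetry condition ⟪b,a⟫ = −τ(⟪a,b⟫). Then ⟪−,−⟫ satisfies the double Jacobi identity if and only if its associated trilinear maps satisfy the quintic Stasheff identity n(n(a,f,b), g, c) + n(a, m(f,b,g), c) − n(a, f, n(b,g,c)) = 0 for all a, b, c ∈ A and f, g ∈ A*. (This is the equivalence, proved in Theorem 5.1 using the double-Jacobi pairing computation of Fact 5.3, between condition (iii) of a double Poisson bracket and the Stasheff identity SI(5) restricted to the component A ⊗ A*[−1] ⊗ A ⊗ A*[−1] ⊗ A paired with A*[−1].) -/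
open TensorProduct

noncomputable section

variable {k : Type*} [Field k] [CharZero k]
variable {A : Type*} [NonUnitalRing A] [Module k A] [SMulCommClass k A A] [IsScalarTower k A A]

/-! Contracting the double Jacobiator `⟪c,⟪b,a⟫⟫_L + σ⟪b,⟪a,c⟫⟫_L + σ²⟪a,⟪c,b⟫⟫_L` with `f` in
the third and `g` in the second tensor factor yields, summand by summand, the three terms of the
quintic Stasheff expression at `(a, f, b, g, c)`; antisymmetry is what moves each contraction onto
the slot where `n` and `m` read it. Over a field these contractions separate the points of
`(A ⊗ A) ⊗ A`, so the two identities hold for all arguments simultaneously. -/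

namespace TensorProduct

section Contraction

variable {R M N P : Type*} [CommRing R] [AddCommGroup M] [Module R M]
  [AddCommGroup N] [Module R N] [AddCommGroup P] [Module R P]

def contractFst (f : Module.Dual R M) : M ⊗[R] N →ₗ[R] N :=
  TensorProduct.lid R N ∘ₗ f.rTensor N

def contractSnd (f : Module.Dual R N) : M ⊗[R] N →ₗ[R] M :=
  TensorProduct.rid R M ∘ₗ f.lTensor M

@[simp] lemma contractFst_tmul (f : Module.Dual R M) (m : M) (n : N) :
    contractFst f (m ⊗ₜ[R] n) = f m • n := by
  simp [contractFst]

@[simp] lemma contractSnd_tmul (f : Module.Dual R N) (m : M) (n : N) :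
    contractSnd f (m ⊗ₜ[R] n) = f n • m := by
  simp [contractSnd]

lemma contractFst_neg (f : Module.Dual R M) (t : M ⊗[R] N) :
    contractFst (-f) t = -contractFst f t := by
  simp [contractFst, LinearMap.rTensor_neg]

lemma contractFst_comm (f : Module.Dual R M) (t : N ⊗[R] M) :
    contractFst f (TensorProduct.comm R N M t) = contractSnd f t := by
  induction t using TensorProduct.induction_on with
  | zero => simp
  | tmul n m => simp
  | add x y hx hy => simp only [map_add, hx, hy]

lemma contractFst_rTensor (f : Module.Dual R P) (φ : M →ₗ[R] P) (t : M ⊗[R] N) :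
    contractFst f (φ.rTensor N t) = contractFst (f ∘ₗ φ) t := by
  induction t using TensorProduct.induction_on with
  | zero => simp
  | tmul m n => simp
  | add x y hx hy => simp only [map_add, hx, hy]

lemma contractSnd_rTensor (f : Module.Dual R N) (φ : M →ₗ[R] P) (t : M ⊗[R] N) :
    contractSnd f (φ.rTensor N t) = φ (contractSnd f t) := by
  induction t using TensorProduct.induction_on with
  | zero => simp
  | tmul m n => simp
  | add x y hx hy => simp only [map_add, hx, hy]

lemma eq_zero_of_forall_contractSnd_eq_zero [Module.Free R N] {t : M ⊗[R] N}
    (h : ∀ f : Module.Dual R N, contractSnd f t = 0) : t = 0 := by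
  classical
  let b := Module.Free.chooseBasis R N
  apply (TensorProduct.equivFinsuppOfBasisRight (M := M) b).injective
  ext i
  have coord_eq : ∀ s : M ⊗[R] N,
      TensorProduct.equivFinsuppOfBasisRight (M := M) b s i = contractSnd (b.coord i) s := by
    intro s
    induction s using TensorProduct.induction_on with
    | zero => simp
    | tmul m n => simp [Module.Basis.coord_apply]
    | add x y hx hy => simp only [map_add, Finsupp.add_apply, hx, hy]
  simp [coord_eq, h]

end Contraction

end TensorProduct

section DoubleBracket

variable {K B : Type*} [Field K] [NonUnitalRing B] [Module K B]
  (br : B →ₗ[K] B →ₗ[K] B ⊗[K] B)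

def doubleJacobiator (a b c : B) : (B ⊗[K] B) ⊗[K] B :=
  brL br a (br b c) + cyc (brL br b (br c a)) + cyc (cyc (brL br c (br a b)))

lemma brL_eq_rTensor (a : B) : brL br a = (br a).rTensor B := rfl

lemma nMap_eq_contractSnd (a : B) (f : Module.Dual K B) (b : B) :
    nMap br a f b = contractSnd f (br b a) := rfl

@[simp] lemma pair2_tmul (f g : Module.Dual K B) (x y : B) :
    pair2 f g (x ⊗ₜ[K] y) = f x * g y := by
  simp [pair2]

lemma pair2_comm (f g : Module.Dual K B) (t : B ⊗[K] B) :
    pair2 f g (TensorProduct.comm K B B t) = pair2 g f t := by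
  induction t using TensorProduct.induction_on with
  | zero => simp
  | tmul x y => simp [mul_comm]
  | add x y hx hy => simp only [map_add, hx, hy]

lemma contractSnd_contractSnd_cyc (f g : Module.Dual K B) (t : (B ⊗[K] B) ⊗[K] B) :
    contractSnd g (contractSnd f (cyc t)) = contractFst (pair2 g f) t := by
  have h : contractSnd g ∘ₗ contractSnd f ∘ₗ cyc =
      contractFst (M := B ⊗[K] B) (pair2 g f) := by
    ext x y z
    simp [cyc, smul_smul, mul_comm]
  exact LinearMap.congr_fun h t

lemma contractSnd_contractSnd_cyc_cyc (f g : Module.Dual K B) (t : (B ⊗[K] B) ⊗[K] B) :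
    contractSnd g (contractSnd f (cyc (cyc t))) = contractFst f (contractSnd g t) := by
  have h : contractSnd g ∘ₗ contractSnd f ∘ₗ cyc ∘ₗ cyc =
      contractFst f ∘ₗ contractSnd (M := B ⊗[K] B) g := by
    ext x y z
    simp [cyc, smul_smul, mul_comm]
  exact LinearMap.congr_fun h t

variable {br}

lemma contractFst_br_of_antisymm
    (hanti : ∀ a b : B, br b a = -(TensorProduct.comm K B B) (br a b))
    (f : Module.Dual K B) (a b : B) :
    contractFst f (br a b) = -nMap br a f b := by
  rw [hanti b a, map_neg, contractFst_comm, nMap_eq_contractSnd]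

lemma pair2_comp_br_of_antisymm
    (hanti : ∀ a b : B, br b a = -(TensorProduct.comm K B B) (br a b))
    (f g : Module.Dual K B) (b : B) :
    pair2 g f ∘ₗ br b = -mMap br f b g := by
  ext x
  simp only [LinearMap.comp_apply, LinearMap.neg_apply, hanti x b, map_neg, pair2_comm]
  rfl

lemma contractSnd_contractSnd_doubleJacobiator
    (hanti : ∀ a b : B, br b a = -(TensorProduct.comm K B B) (br a b))
    (a b c : B) (f g : Module.Dual K B) :
    contractSnd g (contractSnd f (doubleJacobiator br c b a)) =
      nMap br (nMap br a f b) g c + nMap br a (mMap br f b g) c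
        - nMap br a f (nMap br b g c) := by
  have h₁ : contractSnd g (contractSnd f (brL br c (br b a))) = nMap br (nMap br a f b) g c := by
    rw [brL_eq_rTensor, contractSnd_rTensor]
    rfl
  have h₂ : contractSnd g (contractSnd f (cyc (brL br b (br a c)))) =
      nMap br a (mMap br f b g) c := by
    rw [contractSnd_contractSnd_cyc, brL_eq_rTensor, contractFst_rTensor,
      pair2_comp_br_of_antisymm hanti, contractFst_neg, contractFst_br_of_antisymm hanti, neg_neg]
  have h₃ : contractSnd g (contractSnd f (cyc (cyc (brL br a (br c b))))) =
      -nMap br a f (nMap br b g c) := by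
    rw [contractSnd_contractSnd_cyc_cyc, brL_eq_rTensor, contractSnd_rTensor,
      contractFst_br_of_antisymm hanti]
    rfl
  rw [doubleJacobiator, map_add, map_add, map_add, map_add, h₁, h₂, h₃, sub_eq_add_neg]

end DoubleBracket

/-- Under antisymmetry, the double Jacobi identity is equivalent to
the quintic Stasheff identity
`n(n(a,f,b), g, c) + n(a, m(f,b,g), c) − n(a, f, n(b,g,c)) = 0`. -/
theorem doubleJacobi_iff_quinticStasheff (br : A →ₗ[k] A →ₗ[k] A ⊗[k] A)
    (h1 : ∀ a b : A, br b a = - (TensorProduct.comm k A A) (br a b)) :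
    (∀ a b c : A,
      brL br a (br b c) + cyc (brL br b (br c a)) + cyc (cyc (brL br c (br a b))) = 0) ↔
    (∀ (a b c : A) (f g : Module.Dual k A),
      nMap br (nMap br a f b) g c + nMap br a (mMap br f b g) c
        - nMap br a f (nMap br b g c) = 0) := by
  have pairing := contractSnd_contractSnd_doubleJacobiator h1
  constructor
  · intro hJ a b c f g
    rw [← pairing, show doubleJacobiator br c b a = 0 from hJ c b a, map_zero, map_zero]
  · intro hS a b c
    refine eq_zero_of_forall_contractSnd_eq_zero fun f ↦
      eq_zero_of_forall_contractSnd_eq_zero fun g ↦ ?_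
    exact (pairing c b a f g).trans (hS c b a f g)
end
end

section
/- Let ⟪−,−⟫ be a double Poisson bracket on A and set {u,v} := μ(⟪u,v⟫), where μ : A ⊗ A → A is the multiplication map. Then {x, b} = 0 for every x ∈ [A,A] and b ∈ A, and {a, y} ∈ [A,A] for every a ∈ A and y ∈ [A,A]. (This is the well-definedness, on both arguments, of the bracket induced on A/[A,A] in Proposition 3.3, in the degree 0 case with zero differential.) -/
open TensorProduct

noncomputable section

variable {k : Type*} [Field k] [CharZero k]
variable {A : Type*} [NonUnitalRing A] [Module k A] [SMulCommClass k A A] [IsScalarTower k A A]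

/-- The multiplication map `μ : A ⊗ A → A`. -/
def mu : A ⊗[k] A →ₗ[k] A := TensorProduct.lift (LinearMap.mul k A)

/-- The `k`-linear span `[A,A]` of all commutators `ab − ba`. -/
def commSpan : Submodule k A := Submodule.span k {x : A | ∃ a b : A, x = a * b - b * a}

end

/-!
Leibniz makes `{a, -} = μ ∘ ⟪a, -⟫` a derivation of `A`, and a derivation maps a commutator
`[b, c]` to `[{a,b}, c] + [b, {a,c}]`. For the first argument, antisymmetry gives
`{x, a} = -(μ ∘ τ)(⟪a, x⟫)`; since `μ ∘ τ` does not distinguish `t · c` from `c · t`,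
Leibniz shows that `(μ ∘ τ)(⟪a, bc⟫)` is symmetric in `b, c`, so it vanishes on `[b, c]`.
-/

open TensorProduct

section

variable {k : Type*} [Field k] {A : Type*} [NonUnitalRing A] [Module k A]

theorem commSpan_le_iff {p : Submodule k A} :
    commSpan (k := k) (A := A) ≤ p ↔ ∀ a b : A, a * b - b * a ∈ p := by
  rw [commSpan, Submodule.span_le]
  constructor
  · exact fun h a b => h ⟨a, b, rfl⟩
  · rintro h _ ⟨a, b, rfl⟩
    exact h a b

theorem mul_sub_mul_mem_commSpan (a b : A) : a * b - b * a ∈ commSpan (k := k) (A := A) :=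
  commSpan_le_iff.1 le_rfl a b

variable [SMulCommClass k A A] [IsScalarTower k A A]

@[simp]
theorem mu_tmul (u v : A) : mu (u ⊗ₜ[k] v) = u * v := rfl

theorem mu_rAct (c : A) (t : A ⊗[k] A) : mu (rAct c t) = mu t * c := by
  induction t with
  | zero => simp
  | tmul u v => simp [rAct, mul_assoc]
  | add x y hx hy => simp only [map_add, hx, hy, add_mul]

theorem mu_lAct (b : A) (t : A ⊗[k] A) : mu (lAct b t) = b * mu t := by
  induction t with
  | zero => simp
  | tmul u v => simp [lAct, mul_assoc]
  | add x y hx hy => simp only [map_add, hx, hy, mul_add]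

theorem mu_comm_rAct_eq_mu_comm_lAct (c : A) (t : A ⊗[k] A) :
    mu (TensorProduct.comm k A A (rAct c t)) = mu (TensorProduct.comm k A A (lAct c t)) := by
  induction t with
  | zero => simp
  | tmul u v => simp [rAct, lAct, mul_assoc]
  | add x y hx hy => simp only [map_add, hx, hy]

namespace IsDoublePoisson

variable {br : A →ₗ[k] A →ₗ[k] A ⊗[k] A}

theorem mu_apply_mul (h : IsDoublePoisson br) (a b c : A) :
    mu (br a (b * c)) = mu (br a b) * c + b * mu (br a c) := by
  rw [h.2.1, map_add, mu_rAct, mu_lAct]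

theorem mu_apply_commutator (h : IsDoublePoisson br) (a b c : A) :
    mu (br a (b * c - c * b)) =
      (mu (br a b) * c - c * mu (br a b)) + (b * mu (br a c) - mu (br a c) * b) := by
  rw [map_sub, map_sub, h.mu_apply_mul, h.mu_apply_mul]
  abel

theorem mu_apply_commutator_mem (h : IsDoublePoisson br) (a b c : A) :
    mu (br a (b * c - c * b)) ∈ commSpan (k := k) (A := A) := by
  rw [h.mu_apply_commutator]
  exact add_mem (mul_sub_mul_mem_commSpan _ _) (mul_sub_mul_mem_commSpan _ _)

theorem mu_mul_apply_symm (h : IsDoublePoisson br) (a b c : A) :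
    mu (br (b * c) a) = mu (br (c * b) a) := by
  rw [h.1 a, h.1 a, h.2.1, h.2.1]
  simp only [map_neg, map_add, mu_comm_rAct_eq_mu_comm_lAct]
  abel

theorem mu_commutator_apply (h : IsDoublePoisson br) (a b c : A) :
    mu (br (b * c - c * b) a) = 0 := by
  rw [map_sub, LinearMap.sub_apply, map_sub, h.mu_mul_apply_symm, sub_self]

end IsDoublePoisson

end

variable {k : Type*} [Field k] [CharZero k]
variable {A : Type*} [NonUnitalRing A] [Module k A] [SMulCommClass k A A] [IsScalarTower k A A]

/-- For a double Poisson bracket, `{x,b} = μ(⟪x,b⟫) = 0` whenever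
`x ∈ [A,A]`, and `{a,y} ∈ [A,A]` whenever `y ∈ [A,A]`. -/
theorem bracket_well_defined_on_quotient (br : A →ₗ[k] A →ₗ[k] A ⊗[k] A)
    (h : IsDoublePoisson br) :
    (∀ x ∈ (commSpan (k := k) (A := A)), ∀ b : A, mu (br x b) = 0) ∧
    (∀ a : A, ∀ y ∈ (commSpan (k := k) (A := A)),
      mu (br a y) ∈ (commSpan (k := k) (A := A))) := by
  refine ⟨fun x hx b => ?_, fun a y hy => ?_⟩
  · have hker : commSpan ≤ LinearMap.ker (mu ∘ₗ br.flip b) :=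
      commSpan_le_iff.2 fun c d => h.mu_commutator_apply b c d
    exact hker hx
  · have hcomap : commSpan ≤ commSpan.comap (mu ∘ₗ br a) :=
      commSpan_le_iff.2 fun c d => h.mu_apply_commutator_mem a c d
    exact hcomap hy
end
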